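/- arXiv:1607.04435 — 2 statements merged into one kernel-verified Lean document; each statement's English description precedes it below -/
import Mathlib

section
/- In ℚ[[z]] the generating functions R and B satisfy the two functional equations R(z)·(1 − z − B(z)) = 1 and (1 − z²)·B(z) = z^{2s}·(R(z) − B(z) − T_m(z)). -/
open scoped Classical

/-- `x` is an endpoint of some pair in `P`. -/
def Paired (P : Finset (ℕ × ℕ)) (x : ℕ) : Prop := ∃ p ∈ P, p.1 = x ∨ p.2 = x

/-- Conditions (i)–(iii): `P` is a set of pairs `(i,j)`, `1 ≤ i < j ≤ n`, each index in at
most one pair, noncrossing, and every hairpin loop has at least `m` unpaired bases. -/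
def SecBase (m n : ℕ) (P : Finset (ℕ × ℕ)) : Prop :=
  (∀ p ∈ P, 1 ≤ p.1 ∧ p.1 < p.2 ∧ p.2 ≤ n) ∧
  (∀ p ∈ P, ∀ q ∈ P, p ≠ q → p.1 ≠ q.1 ∧ p.1 ≠ q.2 ∧ p.2 ≠ q.1 ∧ p.2 ≠ q.2) ∧
  (∀ p ∈ P, ∀ q ∈ P, ¬(p.1 < q.1 ∧ q.1 < p.2 ∧ p.2 < q.2)) ∧
  (∀ p ∈ P, (∀ x, p.1 < x → x < p.2 → ¬Paired P x) → m ≤ p.2 - p.1 - 1)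

/-- Condition (iv): every maximal stack of `P` has length at least `s`. -/
def StackCond (s : ℕ) (P : Finset (ℕ × ℕ)) : Prop :=
  ∀ p ∈ P, (p.1 - 1, p.2 + 1) ∉ P → ∃ t, s ≤ t ∧ ∀ a < t, (p.1 + a, p.2 - a) ∈ P

/-- `P` is a secondary structure of length `n` with minimum stem size `s` and minimum
hairpin size `m`. -/
def IsSecStruct (s m n : ℕ) (P : Finset (ℕ × ℕ)) : Prop :=
  SecBase m n P ∧ StackCond s P

/-- The (finite) set of all secondary structures of length `n`. -/
noncomputable def secFinset (s m n : ℕ) : Finset (Finset (ℕ × ℕ)) :=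
  (Finset.range (n + 1) ×ˢ Finset.range (n + 1)).powerset.filter (IsSecStruct s m n)

/-- `r n`: the number of secondary structures of length `n`. -/
noncomputable def secCount (s m n : ℕ) : ℕ := (secFinset s m n).card

/-- `b n`: the number of secondary structures of length `n` containing the pair `(1, n)`. -/
noncomputable def secCountB (s m n : ℕ) : ℕ :=
  ((secFinset s m n).filter (fun P => (1, n) ∈ P)).card

/-- The generating function `R(z) = ∑ r_n z^n` in `ℚ[[z]]`. -/
noncomputable def Rgf (s m : ℕ) : PowerSeries ℚ :=
  PowerSeries.mk fun n => (secCount s m n : ℚ)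

/-- The generating function `B(z) = ∑ b_n z^n` in `ℚ[[z]]`. -/
noncomputable def Bgf (s m : ℕ) : PowerSeries ℚ :=
  PowerSeries.mk fun n => (secCountB s m n : ℚ)

/-- `T_m(z) = 1 + z + ⋯ + z^{m-1}` in `ℚ[[z]]`. -/
noncomputable def Tmgf (m : ℕ) : PowerSeries ℚ :=
  ∑ j ∈ Finset.range m, (PowerSeries.X : PowerSeries ℚ) ^ j

/-!
Both identities are recurrences for the coefficients. If base `1` is unpaired, deleting it leaves
an arbitrary structure on `n` bases; if it is paired with `j`, the structure splits into one on
`[1, j]` containing `(1, j)` and an arbitrary one on `(j, n + 1]`. Hence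
`r_{n+1} = r_n + ∑ b_j r_{n+1-j}`, i.e. `R = 1 + zR + BR`.

A structure containing `(1, n)` starts with a stack of at least `s` pairs. If `(s + 1, n - s)` also
belongs to it, deleting `(1, n)` leaves a structure on `n - 2` bases containing its outer pair.
Otherwise deleting the `s` outer pairs leaves a structure on `n - 2s` bases that does not contain
its outer pair and, when empty, must still be a hairpin loop of size at least `m`. Hence
`b_n = b_{n-2} + r_{n-2s} - b_{n-2s} - [n - 2s < m]`.

Substructures living on an interval `(lo, lo + k]` are counted by translating them to `(0, k]`.
-/

open Finset

variable {s m n : ℕ} {P Q : Finset (ℕ × ℕ)} {p q : ℕ × ℕ}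

lemma mem_secFinset : P ∈ secFinset s m n ↔ IsSecStruct s m n P := by
  refine ⟨fun h => (mem_filter.mp h).2, fun h => mem_filter.mpr ⟨mem_powerset.mpr ?_, h⟩⟩
  intro p hp
  have := h.1.1 p hp
  simp only [mem_product, mem_range]
  omega

namespace IsSecStruct

variable (h : IsSecStruct s m n P)
include h

lemma bounds (hp : p ∈ P) : 1 ≤ p.1 ∧ p.1 < p.2 ∧ p.2 ≤ n := h.1.1 p hp

lemma endpoints_ne (hp : p ∈ P) (hq : q ∈ P) (hpq : p ≠ q) :
    p.1 ≠ q.1 ∧ p.1 ≠ q.2 ∧ p.2 ≠ q.1 ∧ p.2 ≠ q.2 :=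
  h.1.2.1 p hp q hq hpq

lemma not_crossing (hp : p ∈ P) (hq : q ∈ P) : ¬(p.1 < q.1 ∧ q.1 < p.2 ∧ p.2 < q.2) :=
  h.1.2.2.1 p hp q hq

lemma hairpin (hp : p ∈ P) (hfree : ∀ x, p.1 < x → x < p.2 → ¬Paired P x) :
    m ≤ p.2 - p.1 - 1 :=
  h.1.2.2.2 p hp hfree

lemma stack (hp : p ∈ P) (hpred : (p.1 - 1, p.2 + 1) ∉ P) :
    ∀ a < s, (p.1 + a, p.2 - a) ∈ P := by
  obtain ⟨t, hst, hrun⟩ := h.2 p hp hpred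
  exact fun a ha => hrun a (by omega)

end IsSecStruct

lemma isSecStruct_of
    (hbounds : ∀ p ∈ P, 1 ≤ p.1 ∧ p.1 < p.2 ∧ p.2 ≤ n)
    (hne : ∀ p ∈ P, ∀ q ∈ P, p ≠ q → p.1 ≠ q.1 ∧ p.1 ≠ q.2 ∧ p.2 ≠ q.1 ∧ p.2 ≠ q.2)
    (hcross : ∀ p ∈ P, ∀ q ∈ P, ¬(p.1 < q.1 ∧ q.1 < p.2 ∧ p.2 < q.2))
    (hhairpin : ∀ p ∈ P, (∀ x, p.1 < x → x < p.2 → ¬Paired P x) → m ≤ p.2 - p.1 - 1)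
    (hstack : ∀ p ∈ P, (p.1 - 1, p.2 + 1) ∉ P → ∀ a < s, (p.1 + a, p.2 - a) ∈ P) :
    IsSecStruct s m n P :=
  ⟨⟨hbounds, hne, hcross, hhairpin⟩, fun p hp hpred => ⟨s, le_rfl, hstack p hp hpred⟩⟩

lemma IsSecStruct.eq_empty (h : IsSecStruct s m n P) (hn : n < m + 2) : P = ∅ := by
  by_contra hne
  obtain ⟨p, hp, hmin⟩ :=
    exists_min_image P (fun p => p.2 - p.1) (nonempty_iff_ne_empty.mpr hne)
  have hp' := h.bounds hp
  have := h.hairpin hp fun x hx1 hx2 ⟨q, hq, hxq⟩ => by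
    have hq' := h.bounds hq
    have hpq : p ≠ q := by rintro rfl; omega
    have := h.endpoints_ne hp hq hpq
    have := h.not_crossing hp hq
    have := h.not_crossing hq hp
    have := hmin q hq
    omega
  omega

lemma secFinset_eq_singleton_empty (hn : n < m + 2) : secFinset s m n = {∅} := by
  ext P
  rw [mem_secFinset, mem_singleton]
  refine ⟨fun h => h.eq_empty hn, ?_⟩
  rintro rfl
  exact isSecStruct_of (by simp) (by simp) (by simp) (by simp) (by simp)

def IsSecStructOn (s m lo k : ℕ) (P : Finset (ℕ × ℕ)) : Prop :=
  IsSecStruct s m (lo + k) P ∧ ∀ p ∈ P, lo < p.1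

def shiftEmb (d : ℕ) : ℕ × ℕ ↪ ℕ × ℕ :=
  (addRightEmbedding d).prodMap (addRightEmbedding d)

@[simp] lemma shiftEmb_apply (d : ℕ) (p : ℕ × ℕ) : shiftEmb d p = (p.1 + d, p.2 + d) := rfl

lemma add_mem_map_shiftEmb {d x y : ℕ} : (x + d, y + d) ∈ Q.map (shiftEmb d) ↔ (x, y) ∈ Q :=
  mem_map' (shiftEmb d) (a := (x, y))

lemma paired_map_shiftEmb {d x : ℕ} : Paired (Q.map (shiftEmb d)) (x + d) ↔ Paired Q x := by
  simp [Paired]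

lemma IsSecStructOn.isSecStruct_of_map_shiftEmb {d : ℕ}
    (hQ : IsSecStructOn s m d n (Q.map (shiftEmb d))) : IsSecStruct s m n Q := by
  obtain ⟨h, hlo⟩ := hQ
  have hmem {p} (hp : p ∈ Q) : (p.1 + d, p.2 + d) ∈ Q.map (shiftEmb d) :=
    mem_map_of_mem (shiftEmb d) hp
  refine isSecStruct_of (fun p hp => ?_) (fun p hp q hq hpq => ?_) (fun p hp q hq => ?_)
    (fun p hp hfree => ?_) (fun p hp hpred a ha => ?_)
  · have := h.bounds (hmem hp); have := hlo _ (hmem hp); dsimp only at *; omega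
  · have := h.endpoints_ne (hmem hp) (hmem hq) ((shiftEmb d).injective.ne hpq)
    dsimp only at this; omega
  · have := h.not_crossing (hmem hp) (hmem hq); dsimp only at this; omega
  · have := h.hairpin (hmem hp) fun x hx1 hx2 hx => by
      dsimp only at hx1 hx2
      obtain ⟨y, rfl⟩ : ∃ y, x = y + d := ⟨x - d, by omega⟩
      exact hfree y (by omega) (by omega) (paired_map_shiftEmb.mp hx)
    dsimp only at this; omega
  · have hp' := hlo _ (hmem hp)
    dsimp only at hp'
    have hrun := h.stack (hmem hp) (by
      rw [show p.1 + d - 1 = p.1 - 1 + d by omega, add_right_comm, add_mem_map_shiftEmb]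
      exact hpred) a ha
    have := h.bounds hrun
    dsimp only at hrun this
    rwa [add_right_comm, show p.2 + d - a = p.2 - a + d by omega, add_mem_map_shiftEmb] at hrun

lemma IsSecStruct.isSecStructOn_map_shiftEmb (h : IsSecStruct s m n Q) (d : ℕ) :
    IsSecStructOn s m d n (Q.map (shiftEmb d)) := by
  refine ⟨isSecStruct_of ?_ ?_ ?_ ?_ ?_, ?_⟩ <;> simp only [forall_mem_map, shiftEmb_apply]
  · intro p hp; have := h.bounds hp; omega
  · intro p hp q hq hpq
    have := h.endpoints_ne hp hq (fun e => hpq (e ▸ rfl)); omega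
  · intro p hp q hq; have := h.not_crossing hp hq; omega
  · intro p hp hfree
    have := h.hairpin hp fun x hx1 hx2 hx =>
      hfree (x + d) (by omega) (by omega) (paired_map_shiftEmb.mpr hx)
    omega
  · intro p hp hpred a ha
    have hp' := h.bounds hp
    have hrun := h.stack hp (fun hc => hpred (by
      rw [show p.1 + d - 1 = p.1 - 1 + d by omega, add_right_comm, add_mem_map_shiftEmb]
      exact hc)) a ha
    have := h.bounds hrun
    rw [show p.2 + d - a = p.2 - a + d by omega, add_right_comm, add_mem_map_shiftEmb]
    exact hrun
  · intro p hp; have := h.bounds hp; omega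

lemma IsSecStructOn.eq_map_shiftEmb {d : ℕ} (h : IsSecStructOn s m d n P) :
    (P.image fun p => (p.1 - d, p.2 - d)).map (shiftEmb d) = P := by
  rw [map_eq_image, image_image]
  conv_rhs => rw [← image_id (s := P)]
  refine image_congr fun p hp => ?_
  have := h.2 p hp
  have := h.1.bounds hp
  ext <;> simp <;> omega

noncomputable def secFinsetOn (s m lo k : ℕ) : Finset (Finset (ℕ × ℕ)) :=
  (secFinset s m (lo + k)).filter fun P => ∀ p ∈ P, lo < p.1

lemma mem_secFinsetOn {lo : ℕ} : P ∈ secFinsetOn s m lo n ↔ IsSecStructOn s m lo n P := by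
  rw [secFinsetOn, mem_filter, mem_secFinset, IsSecStructOn]

lemma secFinsetOn_eq_map (d : ℕ) :
    secFinsetOn s m d n = (secFinset s m n).map (mapEmbedding (shiftEmb d)).toEmbedding := by
  ext P
  simp only [mem_map, mem_secFinsetOn, mem_secFinset, RelEmbedding.coe_toEmbedding,
    mapEmbedding_apply]
  refine ⟨fun h => ⟨_, ?_, h.eq_map_shiftEmb⟩, ?_⟩
  · apply IsSecStructOn.isSecStruct_of_map_shiftEmb
    rwa [h.eq_map_shiftEmb]
  · rintro ⟨Q, hQ, rfl⟩; exact hQ.isSecStructOn_map_shiftEmb d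

lemma card_filter_secFinsetOn (d : ℕ) (φ : Finset (ℕ × ℕ) → Prop) :
    #((secFinsetOn s m d n).filter φ) = #((secFinset s m n).filter (φ ∘ map (shiftEmb d))) := by
  rw [secFinsetOn_eq_map, filter_map, card_map]
  rfl

lemma card_secFinsetOn (d : ℕ) : #(secFinsetOn s m d n) = secCount s m n := by
  rw [secFinsetOn_eq_map, card_map, secCount]

def restrictIoc (lo hi : ℕ) (P : Finset (ℕ × ℕ)) : Finset (ℕ × ℕ) :=
  P.filter fun p => lo < p.1 ∧ p.2 ≤ hi

lemma mem_restrictIoc {lo hi : ℕ} : p ∈ restrictIoc lo hi P ↔ p ∈ P ∧ lo < p.1 ∧ p.2 ≤ hi :=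
  mem_filter

lemma IsSecStruct.isSecStructOn_restrictIoc {lo hi : ℕ} (h : IsSecStruct s m n P)
    (hsplit : ∀ p ∈ P, (lo < p.1 ∧ p.2 ≤ hi) ∨ p.2 ≤ lo ∨ hi < p.1 ∨ (p.1 ≤ lo ∧ hi < p.2))
    (hstack : (lo + 1, hi) ∈ P → (lo, hi + 1) ∈ P → ∀ a < s, (lo + 1 + a, hi - a) ∈ P) :
    IsSecStructOn s m lo (hi - lo) (restrictIoc lo hi P) := by
  refine ⟨isSecStruct_of ?_ ?_ ?_ ?_ ?_, fun p hp => (mem_restrictIoc.mp hp).2.1⟩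
    <;> simp only [mem_restrictIoc]
  · intro p hp; have := h.bounds hp.1; omega
  · intro p hp q hq; exact h.endpoints_ne hp.1 hq.1
  · intro p hp q hq; exact h.not_crossing hp.1 hq.1
  · refine fun p hp hfree => h.hairpin hp.1 fun x hx1 hx2 ⟨r, hr, hxr⟩ => ?_
    refine hfree x hx1 hx2 ⟨r, mem_restrictIoc.mpr ⟨hr, ?_⟩, hxr⟩
    have := h.bounds hr
    rcases hsplit r hr with _ | _ | _ | _ <;> omega
  · intro p ⟨hp, hlo, hhi⟩ hpred a ha
    by_cases hpred' : (p.1 - 1, p.2 + 1) ∈ P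
    · have := h.bounds hp
      have hp_eq : p = (lo + 1, hi) := by
        have := hsplit _ hpred'
        have : ¬(lo < p.1 - 1 ∧ p.2 + 1 ≤ hi) := fun hin => hpred ⟨hpred', hin⟩
        ext <;> dsimp only at * <;> omega
      subst hp_eq
      exact ⟨hstack hp hpred' a ha, by simp; omega⟩
    · exact ⟨h.stack hp hpred' a ha, by simp; omega⟩

lemma IsSecStruct.union_isSecStructOn {j k : ℕ} (hP : IsSecStruct s m j P)
    (hQ : IsSecStructOn s m j k Q) : IsSecStruct s m (j + k) (P ∪ Q) := by
  have hP' {p} (hp : p ∈ P) := hP.bounds hp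
  have hQ' {q} (hq : q ∈ Q) := hQ.1.bounds hq
  have hQlo {q} (hq : q ∈ Q) := hQ.2 q hq
  refine isSecStruct_of ?_ ?_ ?_ ?_ ?_ <;> simp only [mem_union]
  · rintro p (hp | hp)
    · have := hP' hp; omega
    · exact hQ' hp
  · rintro p (hp | hp) q (hq | hq) hpq
    · exact hP.endpoints_ne hp hq hpq
    · have := hP' hp; have := hQ' hq; have := hQlo hq; omega
    · have := hQ' hp; have := hQlo hp; have := hP' hq; omega
    · exact hQ.1.endpoints_ne hp hq hpq
  · rintro p (hp | hp) q (hq | hq)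
    · exact hP.not_crossing hp hq
    · have := hP' hp; have := hQ' hq; have := hQlo hq; omega
    · have := hQ' hp; have := hQlo hp; have := hP' hq; omega
    · exact hQ.1.not_crossing hp hq
  · rintro p (hp | hp) hfree
    · exact hP.hairpin hp fun x hx1 hx2 ⟨r, hr, hxr⟩ =>
        hfree x hx1 hx2 ⟨r, mem_union_left _ hr, hxr⟩
    · exact hQ.1.hairpin hp fun x hx1 hx2 ⟨r, hr, hxr⟩ =>
        hfree x hx1 hx2 ⟨r, mem_union_right _ hr, hxr⟩
  · rintro p (hp | hp) hpred a ha
    · exact Or.inl (hP.stack hp (fun h => hpred (Or.inl h)) a ha)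
    · exact Or.inr (hQ.1.stack hp (fun h => hpred (Or.inr h)) a ha)

def stem (c n : ℕ) : Finset (ℕ × ℕ) := (range c).image fun a => (1 + a, n - a)

lemma mem_stem {c : ℕ} (hc : c ≤ n) : p ∈ stem c n ↔ 1 ≤ p.1 ∧ p.1 ≤ c ∧ p.1 + p.2 = n + 1 := by
  simp only [stem, mem_image, mem_range]
  constructor
  · rintro ⟨a, ha, rfl⟩; dsimp only; omega
  · rintro ⟨h1, h2, h3⟩
    exact ⟨p.1 - 1, by omega, by ext <;> dsimp only <;> omega⟩

lemma IsSecStructOn.isSecStruct_stem_union {c : ℕ} (hc : 1 ≤ c) (h2c : 2 * c ≤ n)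
    (hQ : IsSecStructOn s m c (n - 2 * c) Q) (hempty : Q = ∅ → m ≤ n - 2 * c)
    (hrun : ∀ a < s, c ≤ a → (1 + a, n - a) ∈ Q) :
    IsSecStruct s m n (stem c n ∪ Q) := by
  have hQ' {q} (hq : q ∈ Q) : c < q.1 ∧ q.1 < q.2 ∧ q.2 ≤ n - c := by
    have := hQ.1.bounds hq; have := hQ.2 q hq; omega
  have hstem : ∀ {p}, p ∈ stem c n ↔ 1 ≤ p.1 ∧ p.1 ≤ c ∧ p.1 + p.2 = n + 1 := mem_stem (by omega)
  refine isSecStruct_of ?_ ?_ ?_ ?_ ?_ <;> simp only [mem_union]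
  · rintro p (hp | hp)
    · rw [hstem] at hp; omega
    · have := hQ' hp; omega
  · rintro p (hp | hp) q (hq | hq) hpq
    · rw [hstem] at hp hq; rw [Ne, Prod.ext_iff] at hpq; omega
    · rw [hstem] at hp; have := hQ' hq; omega
    · rw [hstem] at hq; have := hQ' hp; omega
    · exact hQ.1.endpoints_ne hp hq hpq
  · rintro p (hp | hp) q (hq | hq)
    · rw [hstem] at hp hq; omega
    · rw [hstem] at hp; have := hQ' hq; omega
    · rw [hstem] at hq; have := hQ' hp; omega
    · exact hQ.1.not_crossing hp hq
  · rintro p (hp | hp) hfree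
    · rw [hstem] at hp
      rcases Nat.lt_or_ge p.1 c with hlt | hge
      · refine absurd ⟨(p.1 + 1, n - p.1), mem_union_left _ (hstem.mpr ?_), Or.inl rfl⟩
          (hfree (p.1 + 1) (by omega) (by omega))
        dsimp only; omega
      · rcases Q.eq_empty_or_nonempty with hQe | ⟨q, hq⟩
        · have := hempty hQe; omega
        · have := hQ' hq
          exact absurd ⟨q, mem_union_right _ hq, Or.inl rfl⟩ (hfree q.1 (by omega) (by omega))
    · exact hQ.1.hairpin hp fun x hx1 hx2 ⟨r, hr, hxr⟩ =>
        hfree x hx1 hx2 ⟨r, mem_union_right _ hr, hxr⟩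
  · rintro p (hp | hp) hpred a ha
    · rw [hstem] at hp
      have hp1 : p.1 = 1 := by
        by_contra hp1
        exact hpred (Or.inl (hstem.mpr (by dsimp only; omega)))
      rcases Nat.lt_or_ge a c with hac | hca
      · exact Or.inl (hstem.mpr (by dsimp only; omega))
      · exact Or.inr (by convert hrun a ha hca using 2 <;> omega)
    · exact Or.inr (hQ.1.stack hp (fun h => hpred (Or.inr h)) a ha)

lemma restrictIoc_union_eq_left {lo hi : ℕ} (hP : ∀ p ∈ P, lo < p.1 ∧ p.2 ≤ hi)
    (hQ : ∀ q ∈ Q, ¬(lo < q.1 ∧ q.2 ≤ hi)) : restrictIoc lo hi (P ∪ Q) = P := by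
  ext p
  rw [mem_restrictIoc, mem_union]
  refine ⟨fun ⟨hp, hin⟩ => hp.resolve_right fun hq => hQ p hq hin, fun hp => ⟨Or.inl hp, hP p hp⟩⟩

lemma restrictIoc_union_eq_right {lo hi : ℕ} (hP : ∀ p ∈ P, ¬(lo < p.1 ∧ p.2 ≤ hi))
    (hQ : ∀ q ∈ Q, lo < q.1 ∧ q.2 ≤ hi) : restrictIoc lo hi (P ∪ Q) = Q := by
  rw [union_comm, restrictIoc_union_eq_left hQ hP]

lemma restrictIoc_stem_union {c : ℕ} (hQ : ∀ q ∈ Q, c < q.1 ∧ q.2 ≤ n - c) :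
    restrictIoc c (n - c) (stem c n ∪ Q) = Q := by
  refine restrictIoc_union_eq_right (fun p hp => ?_) hQ
  obtain ⟨a, ha, rfl⟩ := mem_image.mp hp
  rw [mem_range] at ha
  dsimp only
  omega

namespace IsSecStruct

variable (h : IsSecStruct s m n P) (h1n : (1, n) ∈ P)
include h h1n

lemma outer_stack : ∀ a < s, (1 + a, n - a) ∈ P :=
  h.stack h1n fun hc => by have := h.bounds hc; dsimp only at this; omega

lemma two_mul_le (hs : 1 ≤ s) : 2 * s ≤ n := by
  have := h.bounds (h.outer_stack h1n (s - 1) (by omega))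
  dsimp only at this
  omega

lemma stem_union_restrictIoc {c : ℕ} (hc : c ≤ s) :
    stem c n ∪ restrictIoc c (n - c) P = P := by
  refine subset_antisymm (union_subset ?_ (filter_subset _ _)) fun p hp => ?_
  · simp only [stem, image_subset_iff, mem_range]
    exact fun a ha => h.outer_stack h1n a (by omega)
  have hp' := h.bounds hp
  have mem_stem_of {a} (ha : a < c) (hpa : p.1 = 1 + a ∨ p.2 = n - a) : p ∈ stem c n := by
    have hq := h.outer_stack h1n a (by omega)
    have hpq : p = (1 + a, n - a) := by
      by_contra hpq
      have := h.bounds hq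
      have := h.endpoints_ne hp hq hpq
      dsimp only at *; omega
    exact mem_image.mpr ⟨a, mem_range.mpr ha, hpq.symm⟩
  rw [mem_union, mem_restrictIoc]
  by_cases hin : c < p.1 ∧ p.2 ≤ n - c
  · exact Or.inr ⟨hp, hin⟩
  · rcases Nat.lt_or_ge c p.1 with hcp | hpc
    · exact Or.inl (mem_stem_of (a := n - p.2) (by omega) (Or.inr (by omega)))
    · exact Or.inl (mem_stem_of (a := p.1 - 1) (by omega) (Or.inl (by omega)))

end IsSecStruct

lemma card_filter_not_paired_one :
    #((secFinset s m (n + 1)).filter fun P => ¬Paired P 1) = secCount s m n := by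
  rw [← card_secFinsetOn 1]
  congr 1
  ext P
  rw [mem_filter, mem_secFinset, mem_secFinsetOn, IsSecStructOn, add_comm 1 n]
  refine and_congr_right fun h => ⟨fun hP p hp => ?_, fun hP ⟨p, hp, hp1⟩ => ?_⟩
  · have := h.bounds hp
    have : p.1 ≠ 1 := fun e => hP ⟨p, hp, Or.inl e⟩
    omega
  · have := h.bounds hp
    have := hP p hp
    omega

lemma IsSecStruct.snd_le_or_lt_fst {j : ℕ} (h : IsSecStruct s m n P) (hj : (1, j) ∈ P)
    (hp : p ∈ P) : p.2 ≤ j ∨ j < p.1 := by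
  have := h.bounds hp
  by_cases hpj : p = (1, j)
  · subst hpj; omega
  · have := h.endpoints_ne hp hj hpj
    have := h.not_crossing hj hp
    dsimp only at *; omega

lemma card_filter_mem_pair_one {j : ℕ} (hj : j ≤ n) :
    #((secFinset s m n).filter fun P => (1, j) ∈ P) = secCountB s m j * secCount s m (n - j) := by
  rw [secCountB, ← card_secFinsetOn j, ← card_product]
  refine card_nbij' (fun P => (restrictIoc 0 j P, restrictIoc j n P)) (fun PQ => PQ.1 ∪ PQ.2)
    ?_ ?_ ?_ ?_ <;> simp only [coe_filter, coe_product, Set.mem_ofPred_eq, Set.mem_prod,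
      mem_coe, mem_secFinset, mem_secFinsetOn, Set.MapsTo, Set.LeftInvOn]
  · rintro P ⟨h, h1j⟩
    have hsplit := fun p hp => h.snd_le_or_lt_fst h1j (p := p) hp
    have hlow := h.isSecStructOn_restrictIoc (lo := 0) (hi := j)
      (fun p hp => by have := h.bounds hp; have := hsplit p hp; omega)
      (fun _ h0 => by have := h.bounds h0; dsimp only at this; omega)
    have hhigh := h.isSecStructOn_restrictIoc (lo := j) (hi := n)
      (fun p hp => by have := h.bounds hp; have := hsplit p hp; omega)
      (fun _ h0 => by have := h.bounds h0; dsimp only at this; omega)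
    exact ⟨⟨by simpa using hlow.1, mem_restrictIoc.mpr ⟨h1j, by simp⟩⟩, hhigh⟩
  · rintro ⟨P, Q⟩ ⟨⟨hP, h1j⟩, hQ⟩
    have := hP.union_isSecStructOn hQ
    rw [Nat.add_sub_cancel' hj] at this
    exact ⟨this, mem_union_left _ h1j⟩
  · rintro P ⟨h, h1j⟩
    ext p
    simp only [mem_union, mem_restrictIoc]
    refine ⟨fun hp => hp.elim And.left And.left, fun hp => ?_⟩
    have := h.bounds hp
    rcases h.snd_le_or_lt_fst h1j hp with hpj | hjp
    · exact Or.inl ⟨hp, by omega, hpj⟩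
    · exact Or.inr ⟨hp, hjp, this.2.2⟩
  · rintro ⟨P, Q⟩ ⟨⟨hP, -⟩, hQ⟩
    have hP' (p) (hp : p ∈ P) := hP.bounds hp
    have hQ' (q) (hq : q ∈ Q) := And.intro (hQ.1.bounds hq) (hQ.2 q hq)
    refine Prod.ext (restrictIoc_union_eq_left ?_ ?_) (restrictIoc_union_eq_right ?_ ?_)
    all_goals intro p hp; first | have := hP' p hp; omega | have := hQ' p hp; omega

lemma secCount_succ : secCount s m (n + 1) =
    secCount s m n + ∑ j ∈ range (n + 2), secCountB s m j * secCount s m (n + 1 - j) := by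
  have hpaired : (secFinset s m (n + 1)).filter (fun P => Paired P 1) =
      (range (n + 2)).biUnion fun j => (secFinset s m (n + 1)).filter fun P => (1, j) ∈ P := by
    ext P
    simp only [mem_filter, mem_biUnion, mem_range]
    constructor
    · rintro ⟨hP, p, hp, hp1⟩
      have := (mem_secFinset.mp hP).bounds hp
      refine ⟨p.2, by omega, hP, ?_⟩
      rwa [show p = (1, p.2) from Prod.ext (by dsimp only; omega) rfl] at hp
    · rintro ⟨j, -, hP, hj⟩
      exact ⟨hP, (1, j), hj, Or.inl rfl⟩
  have hdisj : (range (n + 2) : Set ℕ).PairwiseDisjoint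
      fun j => (secFinset s m (n + 1)).filter fun P => (1, j) ∈ P := by
    intro i _ j _ hij
    refine disjoint_filter.mpr fun P hP hi hj => ?_
    have := (mem_secFinset.mp hP).endpoints_ne hi hj (by simpa using hij)
    simp at this
  conv_lhs => rw [secCount, ← card_filter_add_card_filter_not (fun P => Paired P 1)]
  rw [card_filter_not_paired_one, hpaired, card_biUnion hdisj, add_comm]
  congr 1
  refine sum_congr rfl fun j hj => card_filter_mem_pair_one ?_
  rw [mem_range] at hj
  omega

lemma IsSecStruct.isSecStructOn_restrictIoc_stem {c : ℕ} (h : IsSecStruct s m n P)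
    (h1n : (1, n) ∈ P) (hc : c ≤ s)
    (hstack : (c + 1, n - c) ∈ P → (c, n - c + 1) ∈ P → ∀ a < s, (c + 1 + a, n - c - a) ∈ P) :
    IsSecStructOn s m c (n - 2 * c) (restrictIoc c (n - c) P) := by
  rw [two_mul, ← Nat.sub_sub]
  refine h.isSecStructOn_restrictIoc (fun p hp => ?_) hstack
  rw [← h.stem_union_restrictIoc h1n hc, mem_union, mem_restrictIoc] at hp
  rcases hp with hp | ⟨-, hp⟩
  · obtain ⟨a, ha, rfl⟩ := mem_image.mp hp
    rw [mem_range] at ha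
    have := h.bounds (h.outer_stack h1n a (by omega))
    dsimp only at this ⊢
    omega
  · exact Or.inl hp

lemma card_filter_mem_outer_mem_inner (hs : 1 ≤ s) :
    #((secFinset s m (n + 2)).filter fun P => (1, n + 2) ∈ P ∧ (s + 1, n + 2 - s) ∈ P) =
      secCountB s m n := by
  have key := card_filter_secFinsetOn (s := s) (m := m) (n := n) 1 fun Q => (1 + 1, n + 1) ∈ Q
  simp only [Function.comp_def, add_mem_map_shiftEmb] at key
  rw [secCountB, ← key]
  refine card_nbij' (restrictIoc 1 (n + 1)) (stem 1 (n + 2) ∪ ·) ?_ ?_ ?_ ?_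
    <;> simp only [coe_filter, Set.mem_ofPred_eq, mem_secFinset, mem_secFinsetOn, Set.MapsTo,
      Set.LeftInvOn]
  · rintro P ⟨h, h1n, hsn⟩
    have hrun : ∀ a ≤ s, (1 + a, n + 2 - a) ∈ P := fun a ha => by
      rcases ha.lt_or_eq with ha | rfl
      · exact h.outer_stack h1n a ha
      · rwa [add_comm]
    have := h.isSecStructOn_restrictIoc_stem h1n hs fun _ _ a ha => by
      convert hrun (a + 1) ha using 2 <;> omega
    rw [show n + 2 - 2 * 1 = n by omega, show n + 2 - 1 = n + 1 by omega] at this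
    exact ⟨this, mem_restrictIoc.mpr ⟨hrun 1 hs, by omega⟩⟩
  · rintro Q ⟨hQ, h2⟩
    have hrun := hQ.1.stack h2 fun h0 => by have := hQ.2 _ h0; simp at this
    have h1n : (1, n + 2) ∈ stem 1 (n + 2) := (mem_stem (by omega)).mpr (by dsimp only; omega)
    have hQ' : IsSecStructOn s m 1 (n + 2 - 2 * 1) Q := by rwa [show n + 2 - 2 * 1 = n by omega]
    refine ⟨hQ'.isSecStruct_stem_union le_rfl (by omega) (fun hQe => by simp [hQe] at h2)
      (fun a ha h1a => ?_), mem_union_left _ h1n, mem_union_right _ ?_⟩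
    · convert hrun (a - 1) (by omega) using 2 <;> dsimp only <;> omega
    · convert hrun (s - 1) (by omega) using 2 <;> dsimp only <;> omega
  · rintro P ⟨h, h1n, -⟩
    exact h.stem_union_restrictIoc h1n hs
  · rintro Q ⟨hQ, -⟩
    refine restrictIoc_stem_union fun q hq => ?_
    have := hQ.1.bounds hq
    have := hQ.2 q hq
    omega

lemma card_filter_mem_outer_not_mem_inner (hs : 1 ≤ s) (h2s : 2 * s ≤ n) :
    #((secFinset s m n).filter fun P => (1, n) ∈ P ∧ (s + 1, n - s) ∉ P) =
      #((secFinset s m (n - 2 * s)).filter fun Q =>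
        (1, n - 2 * s) ∉ Q ∧ (Q ≠ ∅ ∨ m ≤ n - 2 * s)) := by
  have key := card_filter_secFinsetOn (s := s) (m := m) (n := n - 2 * s) s fun Q =>
    (1 + s, n - 2 * s + s) ∉ Q ∧ (Q ≠ ∅ ∨ m ≤ n - 2 * s)
  simp only [Function.comp_def, add_mem_map_shiftEmb, ne_eq, map_eq_empty] at key
  rw [← key, show n - 2 * s + s = n - s by omega, add_comm 1 s]
  have hstem : ∀ {p}, p ∈ stem s n ↔ 1 ≤ p.1 ∧ p.1 ≤ s ∧ p.1 + p.2 = n + 1 := mem_stem (by omega)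
  refine card_nbij' (restrictIoc s (n - s)) (stem s n ∪ ·) ?_ ?_ ?_ ?_
    <;> simp only [coe_filter, Set.mem_ofPred_eq, mem_secFinset, mem_secFinsetOn, Set.MapsTo,
      Set.LeftInvOn]
  · rintro P ⟨h, h1n, hsn⟩
    refine ⟨h.isSecStructOn_restrictIoc_stem h1n le_rfl (absurd · hsn),
      fun hc => hsn (mem_restrictIoc.mp hc).1, ?_⟩
    rw [or_iff_not_imp_left, not_not]
    intro hempty
    have hinner := h.outer_stack h1n (s - 1) (by omega)
    have := h.bounds hinner
    have := h.hairpin hinner fun x hx1 hx2 ⟨r, hr, hxr⟩ => by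
      rw [← h.stem_union_restrictIoc h1n le_rfl, hempty, union_empty, hstem] at hr
      dsimp only at *
      omega
    dsimp only at this
    omega
  · rintro Q ⟨hQ, hsn, hne⟩
    refine ⟨hQ.isSecStruct_stem_union hs h2s (fun hQe => hne.resolve_left (not_not.mpr hQe))
      (fun a ha hsa => absurd ha (not_lt.mpr hsa)), mem_union_left _ (hstem.mpr ?_), ?_⟩
    · dsimp only; omega
    · rw [mem_union, hstem]
      rintro (hc | hc)
      · dsimp only at hc; omega
      · exact hsn hc
  · rintro P ⟨h, h1n, -⟩
    exact h.stem_union_restrictIoc h1n le_rfl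
  · rintro Q ⟨hQ, -⟩
    refine restrictIoc_stem_union fun q hq => ?_
    have := hQ.1.bounds hq
    have := hQ.2 q hq
    omega

lemma card_filter_not_mem_add_secCountB (k : ℕ) :
    #((secFinset s m k).filter fun Q => (1, k) ∉ Q ∧ (Q ≠ ∅ ∨ m ≤ k)) + secCountB s m k
      + (if k < m then 1 else 0) = secCount s m k := by
  by_cases hkm : m ≤ k
  · simp only [hkm, or_true, and_true, not_lt.mpr hkm, if_false, add_zero, secCountB, secCount]
    rw [add_comm]
    exact card_filter_add_card_filter_not _
  · rw [secCountB, secCount, secFinset_eq_singleton_empty (by omega), filter_singleton,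
      filter_singleton, if_neg (by simp [hkm]), if_neg (notMem_empty _), if_pos (by omega)]
    rfl

lemma secCountB_add (hs : 1 ≤ s) (h2s : 2 * s ≤ n) :
    secCountB s m n + secCountB s m (n - 2 * s) + (if n - 2 * s < m then 1 else 0) =
      secCountB s m (n - 2) + secCount s m (n - 2 * s) := by
  obtain ⟨N, rfl⟩ : ∃ N, n = N + 2 := ⟨n - 2, by omega⟩
  have hsplit := card_filter_add_card_filter_not (s := (secFinset s m (N + 2)).filter
    fun P => (1, N + 2) ∈ P) (fun P => (s + 1, N + 2 - s) ∈ P)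
  rw [filter_filter, filter_filter, card_filter_mem_outer_mem_inner hs,
    card_filter_mem_outer_not_mem_inner hs h2s, ← secCountB] at hsplit
  rw [← card_filter_not_mem_add_secCountB, ← hsplit, Nat.add_sub_cancel]
  ring

lemma secCountB_eq_zero (hs : 1 ≤ s) (hn : n < 2 * s) : secCountB s m n = 0 := by
  rw [secCountB, card_eq_zero, filter_eq_empty_iff]
  intro P hP h1n
  have := (mem_secFinset.mp hP).two_mul_le h1n hs
  omega

open PowerSeries

lemma coeff_Tmgf (m d : ℕ) : coeff d (Tmgf m) = if d < m then 1 else 0 := by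
  simp [Tmgf, map_sum, coeff_X_pow]

lemma Rgf_eq : Rgf s m = 1 + X * Rgf s m + Bgf s m * Rgf s m := by
  ext (_ | n)
  · simp [Rgf, Bgf, secCount, secCountB, secFinset_eq_singleton_empty]
  · rw [map_add, map_add, coeff_succ_X_mul, coeff_mul, coeff_one, if_neg n.succ_ne_zero,
      Finset.Nat.sum_antidiagonal_eq_sum_range_succ_mk]
    simp only [Rgf, Bgf, coeff_mk]
    rw [secCount_succ]
    push_cast
    ring

lemma Bgf_eq (hs : 1 ≤ s) :
    Bgf s m + X ^ (2 * s) * Bgf s m + X ^ (2 * s) * Tmgf m =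
      X ^ 2 * Bgf s m + X ^ (2 * s) * Rgf s m := by
  ext n
  simp only [map_add, coeff_X_pow_mul', coeff_Tmgf, Rgf, Bgf, coeff_mk]
  by_cases h2s : 2 * s ≤ n
  · simp only [h2s, if_true, show 2 ≤ n by omega]
    exact_mod_cast secCountB_add hs h2s
  · simp only [h2s, if_false, secCountB_eq_zero hs (not_le.mp h2s)]
    split_ifs <;> simp [secCountB_eq_zero hs (show n - 2 < 2 * s by omega)]

theorem stmt1_general (s m : ℕ) (hs : 1 ≤ s) :
    Rgf s m * (1 - PowerSeries.X - Bgf s m) = 1 ∧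
    (1 - PowerSeries.X ^ 2) * Bgf s m
      = PowerSeries.X ^ (2 * s) * (Rgf s m - Bgf s m - Tmgf m) := by
  constructor
  · linear_combination (Rgf_eq (s := s) (m := m))
  · linear_combination (Bgf_eq (m := m) hs)

theorem stmt1 (s m : ℕ) (hs : 1 ≤ s) (hm : 1 ≤ m) :
    Rgf s m * (1 - PowerSeries.X - Bgf s m) = 1 ∧
    (1 - PowerSeries.X ^ 2) * Bgf s m
      = PowerSeries.X ^ (2 * s) * (Rgf s m - Bgf s m - Tmgf m) :=
  stmt1_general s m hs
end

section
/- In ℚ[[z]] the generating function R satisfies the quadratic equation z^{2s}·R(z)² − [(1−z)(1−z²+z^{2s}) + z^{2s}T_m(z)]·R(z) + (1 − z² + z^{2s}) = 0. -/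
open scoped Classical

/-!
Let `C` count the closed structures (those containing the pair `(1, n)`) and `B` the structures
that can fill the inside of a helix. The partner of the last base is either missing or some
`i + 1`, which cuts the structure into an arbitrary one of length `i` and a closed one of length
`n - i`: `R = 1 + z R + R C`. A closed structure is an outermost helix of length `t ≥ s` around
an interior counted by `B`, so `C = ∑_{t ≥ s} z^{2t} B`, i.e. `(1 - z²) C = z^{2s} B`. Every
structure is closed, an interior, or the empty structure of length `< m`: `R = C + B + T_m`.
Eliminating `B` and `C` leaves the quadratic equation for `R`.
-/

namespace SecStruct

open Finset

/-- Conditions (ii)–(iv) of a secondary structure; condition (i) is `InWindow 0 n`. -/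
structure IsValid (s m : ℕ) (P : Finset (ℕ × ℕ)) : Prop where
  disjoint : ∀ p ∈ P, ∀ q ∈ P, p ≠ q → p.1 ≠ q.1 ∧ p.1 ≠ q.2 ∧ p.2 ≠ q.1 ∧ p.2 ≠ q.2
  noncrossing : ∀ p ∈ P, ∀ q ∈ P, ¬(p.1 < q.1 ∧ q.1 < p.2 ∧ p.2 < q.2)
  hairpin : ∀ p ∈ P, (∀ x, p.1 < x → x < p.2 → ¬Paired P x) → m ≤ p.2 - p.1 - 1
  stack : StackCond s P

def InWindow (lo hi : ℕ) (P : Finset (ℕ × ℕ)) : Prop :=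
  ∀ p ∈ P, lo < p.1 ∧ p.1 < p.2 ∧ p.2 ≤ hi

variable {s m n : ℕ} {P Q P₁ P₂ : Finset (ℕ × ℕ)}

theorem isSecStruct_iff : IsSecStruct s m n P ↔ InWindow 0 n P ∧ IsValid s m P :=
  ⟨fun ⟨⟨hw, hd, hc, hh⟩, hs⟩ => ⟨hw, hd, hc, hh, hs⟩,
    fun ⟨hw, hd, hc, hh, hs⟩ => ⟨⟨hw, hd, hc, hh⟩, hs⟩⟩

theorem mem_secFinset : P ∈ secFinset s m n ↔ InWindow 0 n P ∧ IsValid s m P := by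
  rw [secFinset, mem_filter, mem_powerset, isSecStruct_iff, and_iff_right_iff_imp]
  rintro ⟨hw, -⟩ p hp
  have := hw p hp
  simp only [mem_product, mem_range]
  omega

theorem isValid_iff : IsValid s m P ↔
    (∀ p ∈ P, ∀ q ∈ P, p ≠ q → p.1 ≠ q.1 ∧ p.1 ≠ q.2 ∧ p.2 ≠ q.1 ∧ p.2 ≠ q.2) ∧
    (∀ p ∈ P, ∀ q ∈ P, ¬(p.1 < q.1 ∧ q.1 < p.2 ∧ p.2 < q.2)) ∧
    (∀ p ∈ P, (∀ x, p.1 < x → x < p.2 → ¬Paired P x) → m ≤ p.2 - p.1 - 1) ∧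
    StackCond s P :=
  ⟨fun ⟨hd, hc, hh, hs⟩ => ⟨hd, hc, hh, hs⟩, fun ⟨hd, hc, hh, hs⟩ => ⟨hd, hc, hh, hs⟩⟩

theorem stackCond_iff :
    StackCond s P ↔ ∀ p ∈ P, (p.1 - 1, p.2 + 1) ∉ P → ∀ a < s, (p.1 + a, p.2 - a) ∈ P := by
  refine forall₂_congr fun p _ => imp_congr_right fun _ => ⟨?_, fun h => ⟨s, le_rfl, h⟩⟩
  rintro ⟨t, hst, ht⟩ a ha
  exact ht a (ha.trans_le hst)

theorem paired_union {x : ℕ} : Paired (P₁ ∪ P₂) x ↔ Paired P₁ x ∨ Paired P₂ x := by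
  simp only [Paired, mem_union, or_and_right, exists_or]

section Shift

variable {k : ℕ}

def shift (k : ℕ) (Q : Finset (ℕ × ℕ)) : Finset (ℕ × ℕ) := Q.image fun p => (p.1 + k, p.2 + k)

def unshift (k : ℕ) (P : Finset (ℕ × ℕ)) : Finset (ℕ × ℕ) := P.image fun p => (p.1 - k, p.2 - k)

theorem add_mem_shift {i j : ℕ} : (i + k, j + k) ∈ shift k Q ↔ (i, j) ∈ Q := by
  simp [shift]

theorem shift_eq_empty : shift k Q = ∅ ↔ Q = ∅ := image_eq_empty

theorem paired_shift {x : ℕ} : Paired (shift k Q) x ↔ k ≤ x ∧ Paired Q (x - k) := by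
  simp only [Paired, shift, exists_mem_image]
  constructor
  · rintro ⟨q, hq, h⟩
    exact ⟨by omega, q, hq, by omega⟩
  · rintro ⟨hx, q, hq, h⟩
    exact ⟨q, hq, by omega⟩

theorem unshift_shift : unshift k (shift k Q) = Q := by
  simp [unshift, shift, image_image, Function.comp_def]

theorem shift_unshift (h : ∀ p ∈ P, k ≤ p.1 ∧ k ≤ p.2) : shift k (unshift k P) = P := by
  rw [shift, unshift, image_image]
  refine (image_congr fun p hp => ?_).trans image_id'
  have := h p hp
  ext <;> simp <;> omega

theorem inWindow_shift {lo hi : ℕ} :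
    InWindow (lo + k) (hi + k) (shift k Q) ↔ InWindow lo hi Q := by
  simp only [InWindow, shift, forall_mem_image]
  exact forall₂_congr fun q _ => by omega

-- Positivity is needed because `StackCond` is stated with truncated subtraction.
theorem isValid_shift (hQ : ∀ q ∈ Q, 0 < q.1 ∧ 0 < q.2) :
    IsValid s m (shift k Q) ↔ IsValid s m Q := by
  have hgap : ∀ q : ℕ × ℕ, (∀ x, q.1 + k < x → x < q.2 + k → ¬Paired (shift k Q) x) ↔
      ∀ x, q.1 < x → x < q.2 → ¬Paired Q x := by
    simp only [paired_shift]
    refine fun q => ⟨fun h x h1 h2 hx => h (x + k) (by omega) (by omega) ⟨by omega, by simpa⟩,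
      fun h x h1 h2 hx => h (x - k) (by omega) (by omega) hx.2⟩
  have hpred : ∀ q ∈ Q, (q.1 + k - 1, q.2 + k + 1) ∈ shift k Q ↔ (q.1 - 1, q.2 + 1) ∈ Q := by
    intro q hq
    have := hQ q hq
    rw [show q.1 + k - 1 = q.1 - 1 + k by omega, show q.2 + k + 1 = q.2 + 1 + k by omega,
      add_mem_shift]
  have hrun : ∀ q ∈ Q, ∀ a, (q.1 + k + a, q.2 + k - a) ∈ shift k Q ↔ (q.1 + a, q.2 - a) ∈ Q := by
    intro q hq a
    rcases le_or_gt a q.2 with ha | ha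
    · rw [show q.1 + k + a = q.1 + a + k by omega, show q.2 + k - a = q.2 - a + k by omega,
        add_mem_shift]
    · refine iff_of_false (fun h => ?_) (fun h => ?_)
      · obtain ⟨r, hr, hre⟩ := mem_image.mp h
        have := (hQ r hr).2
        simp only [Prod.ext_iff] at hre
        omega
      · have : 0 < q.2 - a := (hQ _ h).2
        omega
  rw [isValid_iff, isValid_iff, StackCond, StackCond]
  simp only [shift, forall_mem_image] at hgap hpred hrun ⊢
  refine and_congr (by simp [Prod.ext_iff]) (and_congr (by simp) (and_congr ?_ ?_))
  · exact forall₂_congr fun q _ => by rw [hgap, Nat.add_sub_add_right]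
  · exact forall₂_congr fun q hq => by rw [hpred q hq]; simp only [hrun q hq]

end Shift

theorem stackCond_union
    (h₁₂ : ∀ p ∈ P₁, ∀ q ∈ P₂, q ≠ (p.1 - 1, p.2 + 1) ∧ ∀ a, q ≠ (p.1 + a, p.2 - a))
    (h₂₁ : ∀ q ∈ P₂, ∀ p ∈ P₁, p ≠ (q.1 - 1, q.2 + 1) ∧ ∀ a, p ≠ (q.1 + a, q.2 - a)) :
    StackCond s (P₁ ∪ P₂) ↔ StackCond s P₁ ∧ StackCond s P₂ := by
  have key : ∀ {A B : Finset (ℕ × ℕ)},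
      (∀ p ∈ A, ∀ q ∈ B, q ≠ (p.1 - 1, p.2 + 1) ∧ ∀ a, q ≠ (p.1 + a, p.2 - a)) → ∀ p ∈ A,
      ((p.1 - 1, p.2 + 1) ∉ A ∪ B → ∃ t, s ≤ t ∧ ∀ a < t, (p.1 + a, p.2 - a) ∈ A ∪ B) ↔
      ((p.1 - 1, p.2 + 1) ∉ A → ∃ t, s ≤ t ∧ ∀ a < t, (p.1 + a, p.2 - a) ∈ A) := by
    intro A B h p hp
    have hpred : (p.1 - 1, p.2 + 1) ∈ A ∪ B ↔ (p.1 - 1, p.2 + 1) ∈ A :=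
      mem_union.trans (or_iff_left fun hq => (h p hp _ hq).1 rfl)
    have hrun : ∀ a, (p.1 + a, p.2 - a) ∈ A ∪ B ↔ (p.1 + a, p.2 - a) ∈ A :=
      fun a => mem_union.trans (or_iff_left fun hq => (h p hp _ hq).2 a rfl)
    simp only [hpred, hrun]
  rw [StackCond, StackCond, StackCond, forall_mem_union]
  exact and_congr (forall₂_congr (key h₁₂))
    (forall₂_congr fun p hp => union_comm P₁ P₂ ▸ key h₂₁ p hp)

theorem IsValid.of_subset (h : IsValid s m P) (hQP : Q ⊆ P)
    (hgap : ∀ q ∈ Q, ∀ x, q.1 < x → x < q.2 → Paired P x → Paired Q x)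
    (hstack : StackCond s Q) : IsValid s m Q where
  disjoint p hp q hq := h.disjoint p (hQP hp) q (hQP hq)
  noncrossing p hp q hq := h.noncrossing p (hQP hp) q (hQP hq)
  hairpin q hq hfree := h.hairpin q (hQP hq) fun x h1 h2 hx => hfree x h1 h2 (hgap q hq x h1 h2 hx)
  stack := hstack

theorem isValid_union_of_lt (h₁ : ∀ p ∈ P₁, p.1 < p.2) (h₂ : ∀ q ∈ P₂, q.1 < q.2)
    (hsep : ∀ p ∈ P₁, ∀ q ∈ P₂, p.2 < q.1) :
    IsValid s m (P₁ ∪ P₂) ↔ IsValid s m P₁ ∧ IsValid s m P₂ := by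
  have sep : ∀ p ∈ P₁, ∀ q ∈ P₂, p.1 < p.2 ∧ p.2 < q.1 ∧ q.1 < q.2 :=
    fun p hp q hq => ⟨h₁ p hp, hsep p hp q hq, h₂ q hq⟩
  have hgap₁ : ∀ p ∈ P₁, ∀ x < p.2, ¬Paired P₂ x := by
    rintro p hp x hx ⟨q, hq, hqx⟩
    have := sep p hp q hq
    omega
  have hgap₂ : ∀ q ∈ P₂, ∀ x, q.1 < x → ¬Paired P₁ x := by
    rintro q hq x hx ⟨p, hp, hpx⟩
    have := sep p hp q hq
    omega
  have hstack : StackCond s (P₁ ∪ P₂) ↔ StackCond s P₁ ∧ StackCond s P₂ := by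
    refine stackCond_union (fun p hp q hq => ?_) (fun q hq p hp => ?_) <;>
      have := sep p hp q hq <;> refine ⟨?_, fun a => ?_⟩ <;> intro he <;>
      simp only [Prod.ext_iff] at he <;> omega
  constructor
  · intro h
    refine ⟨h.of_subset subset_union_left (fun p hp x _ hx hP => ?_) (hstack.mp h.stack).1,
      h.of_subset subset_union_right (fun q hq x hx _ hP => ?_) (hstack.mp h.stack).2⟩
    · exact (paired_union.mp hP).resolve_right (hgap₁ p hp x hx)
    · exact (paired_union.mp hP).resolve_left (hgap₂ q hq x hx)
  · rintro ⟨hv₁, hv₂⟩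
    refine ⟨?_, ?_, ?_, hstack.mpr ⟨hv₁.stack, hv₂.stack⟩⟩
    · simp only [mem_union]
      rintro p (hp | hp) q (hq | hq) hpq
      · exact hv₁.disjoint p hp q hq hpq
      all_goals first
        | exact hv₂.disjoint p hp q hq hpq
        | have := sep p hp q hq; omega
        | have := sep q hq p hp; omega
    · simp only [mem_union]
      rintro p (hp | hp) q (hq | hq)
      · exact hv₁.noncrossing p hp q hq
      all_goals first
        | exact hv₂.noncrossing p hp q hq
        | have := sep p hp q hq; omega
        | have := sep q hq p hp; omega
    · simp only [mem_union]
      rintro p (hp | hp) hfree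
      · exact hv₁.hairpin p hp fun x h1 h2 hx => hfree x h1 h2 (paired_union.mpr (Or.inl hx))
      · exact hv₂.hairpin p hp fun x h1 h2 hx => hfree x h1 h2 (paired_union.mpr (Or.inr hx))

noncomputable def closedCount (s m n : ℕ) : ℕ := #{P ∈ secFinset s m n | (1, n) ∈ P}

/-- Structures that can fill the inside of a helix: the helix must not continue, and an empty
interior is a hairpin loop. -/
noncomputable def interiorCount (s m n : ℕ) : ℕ :=
  #{P ∈ secFinset s m n | (1, n) ∉ P ∧ (P = ∅ → m ≤ n)}

section Concatenation

variable {a b : ℕ}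

theorem isValid_union_shift (h₁ : InWindow 0 a P₁) (h₂ : InWindow 0 b P₂) :
    IsValid s m (P₁ ∪ shift a P₂) ↔ IsValid s m P₁ ∧ IsValid s m P₂ := by
  have h₂' : InWindow (0 + a) (b + a) (shift a P₂) := inWindow_shift.mpr h₂
  rw [isValid_union_of_lt (fun p hp => (h₁ p hp).2.1) (fun q hq => (h₂' q hq).2.1)
    fun p hp q hq => by have := h₁ p hp; have := h₂' q hq; omega,
    isValid_shift fun q hq => by have := h₂ q hq; omega]

theorem filter_union_shift_left (h₁ : InWindow 0 a P₁) (h₂ : InWindow 0 b P₂) :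
    {p ∈ P₁ ∪ shift a P₂ | p.2 ≤ a} = P₁ := by
  have h₂' : InWindow (0 + a) (b + a) (shift a P₂) := inWindow_shift.mpr h₂
  rw [filter_union, filter_true_of_mem fun p hp => (h₁ p hp).2.2,
    filter_false_of_mem fun q hq => by have := h₂' q hq; omega, union_empty]

theorem filter_union_shift_right (h₁ : InWindow 0 a P₁) (h₂ : InWindow 0 b P₂) :
    {p ∈ P₁ ∪ shift a P₂ | a < p.1} = shift a P₂ := by
  have h₂' : InWindow (0 + a) (b + a) (shift a P₂) := inWindow_shift.mpr h₂
  rw [filter_union, filter_false_of_mem fun p hp => by have := h₁ p hp; omega,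
    filter_true_of_mem fun q hq => by have := h₂' q hq; omega, empty_union]

theorem eq_union_shift_of_mem (hw : InWindow 0 (a + b) P) (hv : IsValid s m P)
    (hab : (a + 1, a + b) ∈ P) :
    InWindow 0 a {p ∈ P | p.2 ≤ a} ∧ InWindow 0 b (unshift a {p ∈ P | a < p.1}) ∧
      {p ∈ P | p.2 ≤ a} ∪ shift a (unshift a {p ∈ P | a < p.1}) = P := by
  have hsplit : ∀ p ∈ P, p.2 ≤ a ∨ a < p.1 := by
    intro p hp
    by_contra! hp'
    have hne : p ≠ (a + 1, a + b) := fun he => by rw [he] at hp'; omega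
    have := hv.disjoint p hp _ hab hne
    have := hv.noncrossing p hp _ hab
    have := hw p hp
    omega
  refine ⟨fun p hp => ?_, ?_, ?_⟩
  · have := hw p (mem_filter.mp hp).1
    have := (mem_filter.mp hp).2
    omega
  · simp only [InWindow, unshift, forall_mem_image, mem_filter]
    intro p ⟨hp, hap⟩
    have := hw p hp
    omega
  · rw [shift_unshift fun p hp => by
      have := (mem_filter.mp hp).2
      have := hw p (mem_filter.mp hp).1
      omega, ← filter_or]
    exact filter_true_of_mem hsplit

theorem card_filter_pair_eq_mul (a b : ℕ) :
    #{P ∈ secFinset s m (a + b) | (a + 1, a + b) ∈ P} = secCount s m a * closedCount s m b := by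
  rw [secCount, closedCount, ← card_product]
  refine card_nbij' (fun P => ({p ∈ P | p.2 ≤ a}, unshift a {p ∈ P | a < p.1}))
    (fun Q => Q.1 ∪ shift a Q.2) ?_ ?_ ?_ ?_
  · intro P hP
    obtain ⟨hP, hab⟩ := mem_filter.mp hP
    obtain ⟨hw, hv⟩ := mem_secFinset.mp hP
    obtain ⟨h₁, h₂, hPeq⟩ := eq_union_shift_of_mem hw hv hab
    rw [← hPeq, isValid_union_shift h₁ h₂] at hv
    refine mem_product.mpr ⟨mem_secFinset.mpr ⟨h₁, hv.1⟩, mem_filter.mpr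
      ⟨mem_secFinset.mpr ⟨h₂, hv.2⟩, mem_image.mpr ⟨_, mem_filter.mpr ⟨hab, by simp⟩, by simp⟩⟩⟩
  · rintro ⟨Q₁, Q₂⟩ hQ
    obtain ⟨hQ₁, hQ₂⟩ := mem_product.mp hQ
    obtain ⟨hQ₂, h1b⟩ := mem_filter.mp hQ₂
    obtain ⟨h₁, hv₁⟩ := mem_secFinset.mp hQ₁
    obtain ⟨h₂, hv₂⟩ := mem_secFinset.mp hQ₂
    have hw : InWindow (0 + a) (b + a) (shift a Q₂) := inWindow_shift.mpr h₂
    refine mem_filter.mpr ⟨mem_secFinset.mpr ⟨fun p hp => ?_,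
      (isValid_union_shift h₁ h₂).mpr ⟨hv₁, hv₂⟩⟩, mem_union_right _ ?_⟩
    · rcases mem_union.mp hp with hp | hp
      · have := h₁ p hp; omega
      · have := hw p hp; omega
    · simpa [add_comm] using (add_mem_shift (k := a)).mpr h1b
  · intro P hP
    obtain ⟨hP, hab⟩ := mem_filter.mp hP
    obtain ⟨hw, hv⟩ := mem_secFinset.mp hP
    exact (eq_union_shift_of_mem hw hv hab).2.2
  · rintro ⟨Q₁, Q₂⟩ hQ
    obtain ⟨hQ₁, hQ₂⟩ := mem_product.mp hQ
    have h₁ := (mem_secFinset.mp hQ₁).1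
    have h₂ := (mem_secFinset.mp (mem_filter.mp hQ₂).1).1
    simp only [filter_union_shift_left h₁ h₂, filter_union_shift_right h₁ h₂, unshift_shift]

end Concatenation

theorem filter_not_paired_eq (hn : 1 ≤ n) :
    {P ∈ secFinset s m n | ¬Paired P n} = secFinset s m (n - 1) := by
  ext P
  rw [mem_filter, mem_secFinset, mem_secFinset]
  simp only [InWindow, Paired]
  constructor
  · rintro ⟨⟨hw, hv⟩, hn⟩
    refine ⟨fun p hp => ?_, hv⟩
    have := hw p hp
    have : p.2 ≠ n := fun h => hn ⟨p, hp, Or.inr h⟩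
    omega
  · rintro ⟨hw, hv⟩
    refine ⟨⟨fun p hp => ?_, hv⟩, fun ⟨p, hp, h⟩ => ?_⟩ <;> have := hw p hp <;> omega

theorem filter_paired_eq_biUnion :
    {P ∈ secFinset s m n | Paired P n} =
      (range (n + 1)).biUnion fun i => {P ∈ secFinset s m n | (i + 1, n) ∈ P} := by
  ext P
  simp only [mem_filter, mem_biUnion, mem_range]
  constructor
  · rintro ⟨hP, p, hp, hpn⟩
    have := (mem_secFinset.mp hP).1 p hp
    refine ⟨p.1 - 1, by omega, hP, ?_⟩
    convert hp using 1
    ext <;> simp <;> omega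
  · rintro ⟨i, -, hP, hi⟩
    exact ⟨hP, _, hi, Or.inr rfl⟩

theorem secCount_eq_add_sum (hn : 1 ≤ n) :
    secCount s m n = secCount s m (n - 1) +
      ∑ i ∈ range (n + 1), secCount s m i * closedCount s m (n - i) := by
  have hdisj : ((range (n + 1) : Finset ℕ) : Set ℕ).PairwiseDisjoint
      fun i => {P ∈ secFinset s m n | (i + 1, n) ∈ P} := by
    intro i _ j _ hij
    refine disjoint_filter.mpr fun P hP hi hj => ?_
    have := (mem_secFinset.mp hP).2.disjoint _ hi _ hj (by simpa using hij)
    exact this.2.2.2 rfl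
  rw [secCount, ← card_filter_add_card_filter_not (fun P => Paired P n), add_comm,
    filter_not_paired_eq hn, filter_paired_eq_biUnion, card_biUnion hdisj, secCount]
  refine congrArg _ (sum_congr rfl fun i hi => ?_)
  have hi : i + (n - i) = n := by have := mem_range.mp hi; omega
  rw [← card_filter_pair_eq_mul, hi]

section Helix

variable {t : ℕ}

def helix (t n : ℕ) : Finset (ℕ × ℕ) := (range t).image fun a => (a + 1, n - a)

theorem mem_helix {x : ℕ × ℕ} : x ∈ helix t n ↔ 1 ≤ x.1 ∧ x.1 ≤ t ∧ x.2 = n + 1 - x.1 := by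
  simp only [helix, mem_image, mem_range]
  constructor
  · rintro ⟨a, ha, rfl⟩
    simp only
    omega
  · rintro ⟨h1, h2, h3⟩
    exact ⟨x.1 - 1, by omega, by ext <;> simp <;> omega⟩

theorem IsValid.of_helix_union (hv : IsValid s m (helix t n ∪ Q)) (ht : 1 ≤ t) (htn : 2 * t ≤ n)
    (hQ : InWindow t (n - t) Q) (hni : (t + 1, n - t) ∉ Q) :
    s ≤ t ∧ (Q = ∅ → m ≤ n - 2 * t) ∧ IsValid s m Q := by
  have hrun := stackCond_iff.mp hv.stack
  refine ⟨?_, fun hQe => ?_, hv.of_subset subset_union_right ?_ ?_⟩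
  · by_contra! hts
    have hpred : (1 - 1, n + 1) ∉ helix t n ∪ Q := by
      rw [mem_union, mem_helix]
      exact fun h => h.elim (by omega) fun h => by have := hQ _ h; omega
    have := hrun (1, n) (mem_union_left _ (mem_helix.mpr (by omega))) hpred t hts
    rw [mem_union, mem_helix, add_comm] at this
    exact this.elim (by omega) hni
  · have := hv.hairpin (t, n - t + 1) (mem_union_left _ (mem_helix.mpr (by omega)))
      fun x h1 h2 hx => by
        obtain ⟨y, hy, hyx⟩ := hx
        rw [hQe, union_empty, mem_helix] at hy
        omega
    omega
  · intro q hq x h1 h2 hx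
    refine (paired_union.mp hx).resolve_left fun ⟨y, hy, hyx⟩ => ?_
    have := mem_helix.mp hy
    have := hQ q hq
    omega
  · refine stackCond_iff.mpr fun q hq hpred a ha => ?_
    have hq' := hQ q hq
    have hpred' : (q.1 - 1, q.2 + 1) ∉ helix t n ∪ Q := by
      refine notMem_union.mpr ⟨fun h => hni ?_, hpred⟩
      have := mem_helix.mp h
      convert hq using 1
      ext <;> simp <;> omega
    refine (mem_union.mp (hrun q (mem_union_right _ hq) hpred' a ha)).resolve_left fun h => ?_
    have := mem_helix.mp h
    omega

theorem isValid_helix_union (hst : s ≤ t) (htn : 2 * t ≤ n) (hQ : InWindow t (n - t) Q)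
    (hemp : Q = ∅ → m ≤ n - 2 * t) (hv : IsValid s m Q) : IsValid s m (helix t n ∪ Q) where
  disjoint := by
    simp only [mem_union]
    rintro p (hp | hp) q (hq | hq) hpq
    · have := mem_helix.mp hp
      have := mem_helix.mp hq
      rw [Ne, Prod.ext_iff] at hpq
      omega
    · have := mem_helix.mp hp
      have := hQ q hq
      omega
    · have := hQ p hp
      have := mem_helix.mp hq
      omega
    · exact hv.disjoint p hp q hq hpq
  noncrossing := by
    simp only [mem_union]
    rintro p (hp | hp) q (hq | hq)
    · have := mem_helix.mp hp
      have := mem_helix.mp hq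
      omega
    · have := mem_helix.mp hp
      have := hQ q hq
      omega
    · have := hQ p hp
      have := mem_helix.mp hq
      omega
    · exact hv.noncrossing p hp q hq
  hairpin := by
    simp only [mem_union]
    rintro p (hp | hp) hfree
    · have hp' := mem_helix.mp hp
      rcases hp'.2.1.lt_or_eq with hlt | heq
      · exact absurd ⟨(p.1 + 1, n - p.1), mem_union_left _ (mem_helix.mpr (by omega)), Or.inl rfl⟩
          (hfree (p.1 + 1) (by omega) (by omega))
      · rcases Q.eq_empty_or_nonempty with hQe | ⟨q, hq⟩
        · have := hemp hQe
          omega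
        · have := hQ q hq
          exact absurd ⟨q, mem_union_right _ hq, Or.inl rfl⟩ (hfree q.1 (by omega) (by omega))
    · exact hv.hairpin p hp fun x h1 h2 hx => hfree x h1 h2 (paired_union.mpr (Or.inr hx))
  stack := by
    refine stackCond_iff.mpr ?_
    simp only [mem_union]
    rintro p (hp | hp) hpred a ha
    · have := mem_helix.mp hp
      by_cases h1 : p.1 = 1
      · exact Or.inl (mem_helix.mpr (by omega))
      · exact absurd (Or.inl (mem_helix.mpr (by omega))) hpred
    · exact Or.inr (stackCond_iff.mp hv.stack p hp (fun h => hpred (Or.inr h)) a ha)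

theorem inWindow_helix_sdiff (hw : InWindow 0 n P) (hv : IsValid s m P) (hsub : helix t n ⊆ P) :
    InWindow t (n - t) (P \ helix t n) := by
  intro p hp
  obtain ⟨hpP, hph⟩ := mem_sdiff.mp hp
  have hp' := hw p hpP
  have hne : ∀ y ∈ helix t n, p.1 ≠ y.1 ∧ p.2 ≠ y.2 := fun y hy => by
    have := hv.disjoint p hpP y (hsub hy) (fun h => hph (h ▸ hy))
    exact ⟨this.1, this.2.2.2⟩
  have h1 : ¬p.1 ≤ t := fun h => (hne (p.1, n + 1 - p.1) (mem_helix.mpr ⟨by omega, h, rfl⟩)).1 rfl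
  have h2 : ¬n - t < p.2 := fun h =>
    (hne (n + 1 - p.2, p.2) (mem_helix.mpr ⟨by omega, by omega, by simp only; omega⟩)).2 rfl
  omega

theorem inWindow_shift_helix (htn : 2 * t ≤ n) :
    InWindow t (n - t) (shift t Q) ↔ InWindow 0 (n - 2 * t) Q := by
  have := inWindow_shift (lo := 0) (hi := n - 2 * t) (k := t) (Q := Q)
  rwa [zero_add, show n - 2 * t + t = n - t by omega] at this

theorem eq_helix_union_shift (hP : P ∈ secFinset s m n) (hsub : helix t n ⊆ P)
    (htn : 2 * t ≤ n) :
    InWindow 0 (n - 2 * t) (unshift t (P \ helix t n)) ∧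
      helix t n ∪ shift t (unshift t (P \ helix t n)) = P := by
  have hR := inWindow_helix_sdiff (mem_secFinset.mp hP).1 (mem_secFinset.mp hP).2 hsub
  have hshift : shift t (unshift t (P \ helix t n)) = P \ helix t n :=
    shift_unshift fun p hp => by have := hR p hp; omega
  rw [← inWindow_shift_helix htn, hshift]
  exact ⟨hR, union_sdiff_of_subset hsub⟩

theorem helix_union_shift_mem_iff (hst : s ≤ t) (ht : 1 ≤ t) (htn : 2 * t ≤ n)
    (hQ : InWindow 0 (n - 2 * t) Q) :
    (helix t n ∪ shift t Q ∈ secFinset s m n ∧ (t + 1, n - t) ∉ helix t n ∪ shift t Q) ↔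
      (Q ∈ secFinset s m (n - 2 * t) ∧ (1, n - 2 * t) ∉ Q ∧ (Q = ∅ → m ≤ n - 2 * t)) := by
  have hQ' := (inWindow_shift_helix htn).mpr hQ
  have hni : (t + 1, n - t) ∈ helix t n ∪ shift t Q ↔ (1, n - 2 * t) ∈ Q := by
    rw [mem_union, mem_helix, show t + 1 = 1 + t by omega, show n - t = n - 2 * t + t by omega,
      add_mem_shift]
    simp
  have hpos : ∀ q ∈ Q, 0 < q.1 ∧ 0 < q.2 := fun q hq => by have := hQ q hq; omega
  have hwin : InWindow 0 n (helix t n ∪ shift t Q) := by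
    intro p hp
    rcases mem_union.mp hp with hp | hp
    · have := mem_helix.mp hp
      omega
    · have := hQ' p hp
      omega
  rw [mem_secFinset, mem_secFinset, hni, ← isValid_shift hpos (k := t), ← shift_eq_empty (k := t)]
  constructor
  · rintro ⟨⟨-, hv⟩, h1⟩
    obtain ⟨-, hemp, hv'⟩ := hv.of_helix_union ht htn hQ' fun h => h1 (hni.mp (mem_union_right _ h))
    exact ⟨⟨hQ, hv'⟩, h1, hemp⟩
  · rintro ⟨⟨-, hv⟩, h1, hemp⟩
    exact ⟨⟨hwin, isValid_helix_union hst htn hQ' hemp hv⟩, h1⟩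

theorem card_filter_helix (hst : s ≤ t) (ht : 1 ≤ t) (htn : 2 * t ≤ n) :
    #{P ∈ secFinset s m n | helix t n ⊆ P ∧ (t + 1, n - t) ∉ P} =
      interiorCount s m (n - 2 * t) := by
  refine card_nbij' (fun P => unshift t (P \ helix t n)) (fun Q => helix t n ∪ shift t Q)
    (fun P hP => ?_) (fun Q hQ => ?_) (fun P hP => ?_) (fun Q hQ => ?_)
  · obtain ⟨hP, hsub, hni⟩ := mem_filter.mp hP
    obtain ⟨hQ, hPeq⟩ := eq_helix_union_shift hP hsub htn
    rw [← hPeq] at hP hni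
    exact mem_filter.mpr ((helix_union_shift_mem_iff hst ht htn hQ).mp ⟨hP, hni⟩)
  · obtain ⟨hQm, hQ⟩ := mem_filter.mp hQ
    obtain ⟨hP, hni⟩ :=
      (helix_union_shift_mem_iff hst ht htn (mem_secFinset.mp hQm).1).mpr ⟨hQm, hQ⟩
    exact mem_filter.mpr ⟨hP, subset_union_left, hni⟩
  · obtain ⟨hP, hsub, -⟩ := mem_filter.mp hP
    exact (eq_helix_union_shift hP hsub htn).2
  · have hQ' := (inWindow_shift_helix htn).mpr (mem_secFinset.mp (mem_filter.mp hQ).1).1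
    have hdisj : Disjoint (helix t n) (shift t Q) := disjoint_left.mpr fun x hx hx' => by
      have := mem_helix.mp hx
      have := hQ' x hx'
      omega
    simp only [union_sdiff_cancel_left hdisj, unshift_shift]

end Helix

theorem exists_helix_of_mem (hP : P ∈ secFinset s m n) (h1n : (1, n) ∈ P) :
    ∃ t, s ≤ t ∧ 2 * t ≤ n ∧ helix t n ⊆ P ∧ (t + 1, n - t) ∉ P := by
  obtain ⟨hw, hv⟩ := mem_secFinset.mp hP
  have hex : ∃ t, (t + 1, n - t) ∉ P := ⟨n, fun h => by have := hw _ h; simp at this⟩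
  set t := Nat.find hex
  have hspec : (t + 1, n - t) ∉ P := Nat.find_spec hex
  have hmin : ∀ a < t, (a + 1, n - a) ∈ P := fun a ha => not_not.mp (Nat.find_min hex ha)
  have ht : 1 ≤ t := Nat.one_le_iff_ne_zero.mpr fun h0 => hspec (by simpa [h0])
  have hsub : helix t n ⊆ P := fun x hx => by
    obtain ⟨h1, h2, h3⟩ := mem_helix.mp hx
    convert hmin (x.1 - 1) (by omega) using 1
    ext <;> simp <;> omega
  have hpred : (1 - 1, n + 1) ∉ P := fun h => by have := hw _ h; simp at this
  refine ⟨t, ?_, ?_, hsub, hspec⟩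
  · by_contra! hts
    exact hspec (add_comm 1 t ▸ stackCond_iff.mp hv.stack _ h1n hpred t hts)
  · have := hw _ (hmin (t - 1) (by omega))
    omega

theorem closedCount_eq_sum (hs : 1 ≤ s) :
    closedCount s m n = ∑ t ∈ Icc s (n / 2), interiorCount s m (n - 2 * t) := by
  have hdisj : ((Icc s (n / 2) : Finset ℕ) : Set ℕ).PairwiseDisjoint
      fun t => {P ∈ secFinset s m n | helix t n ⊆ P ∧ (t + 1, n - t) ∉ P} := by
    intro t _ t' _ htt'
    refine disjoint_filter.mpr fun P _ h h' => ?_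
    rcases htt'.lt_or_gt with hlt | hlt
    · exact h.2 (h'.1 (mem_helix.mpr (by simp only; omega)))
    · exact h'.2 (h.1 (mem_helix.mpr (by simp only; omega)))
  have hunion : {P ∈ secFinset s m n | (1, n) ∈ P} = (Icc s (n / 2)).biUnion
      fun t => {P ∈ secFinset s m n | helix t n ⊆ P ∧ (t + 1, n - t) ∉ P} := by
    ext P
    simp only [mem_filter, mem_biUnion, mem_Icc]
    constructor
    · rintro ⟨hP, h1n⟩
      obtain ⟨t, hst, htn, hsub, hni⟩ := exists_helix_of_mem hP h1n
      exact ⟨t, ⟨hst, by omega⟩, hP, hsub, hni⟩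
    · rintro ⟨t, ⟨hst, -⟩, hP, hsub, -⟩
      exact ⟨hP, hsub (mem_helix.mpr (by simp only; omega))⟩
  rw [closedCount, hunion, card_biUnion hdisj]
  refine sum_congr rfl fun t ht => ?_
  have := mem_Icc.mp ht
  exact card_filter_helix this.1 (by omega) (by omega)

theorem sum_Icc_half_add_two {M : Type*} [AddCommMonoid M] (f : ℕ → M) (hs : 1 ≤ s) (n : ℕ) :
    ∑ t ∈ Icc s ((n + 2) / 2), f (n + 2 - 2 * t) =
      ∑ t ∈ Icc s (n / 2), f (n - 2 * t) + if 2 * s ≤ n + 2 then f (n + 2 - 2 * s) else 0 := by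
  obtain ⟨s, rfl⟩ := Nat.exists_eq_add_of_le' hs
  rw [show (n + 2) / 2 = n / 2 + 1 by omega, ← map_add_right_Icc, sum_map]
  simp only [addRightEmbedding_apply, show ∀ u, n + 2 - 2 * (u + 1) = n - 2 * u by omega]
  split_ifs with h
  · rw [← add_sum_Ioc_eq_sum_Icc (by omega), ← Icc_add_one_left_eq_Ioc, add_comm]
  · rw [Icc_eq_empty (by omega), Icc_eq_empty (by omega)]
    simp

theorem isValid_empty : IsValid s m ∅ := by
  refine ⟨?_, ?_, ?_, ?_⟩ <;> simp [StackCond]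

theorem secCount_eq_closedCount_add_interiorCount :
    secCount s m n = closedCount s m n + interiorCount s m n + if n < m then 1 else 0 := by
  have hrest : #{P ∈ secFinset s m n | (1, n) ∉ P ∧ ¬(P = ∅ → m ≤ n)} =
      if n < m then 1 else 0 := by
    split_ifs with h
    · refine card_eq_one.mpr ⟨∅, eq_singleton_iff_unique_mem.mpr ⟨?_, fun P hP => ?_⟩⟩
      · exact mem_filter.mpr ⟨mem_secFinset.mpr ⟨by simp [InWindow], isValid_empty⟩, by simp,
          by simpa⟩
      · exact by_contra fun hP' => (mem_filter.mp hP).2.2 fun hP'' => absurd hP'' hP'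
    · exact card_eq_zero.mpr (filter_false_of_mem fun P _ hP => hP.2 fun _ => by omega)
  rw [secCount, ← card_filter_add_card_filter_not (fun P => (1, n) ∈ P),
    ← card_filter_add_card_filter_not (fun P : Finset (ℕ × ℕ) => P = ∅ → m ≤ n)
      (s := {P ∈ secFinset s m n | (1, n) ∉ P}),
    filter_filter, filter_filter, hrest, closedCount, interiorCount, add_assoc]

theorem secCount_zero : secCount s m 0 = 1 := by
  refine card_eq_one.mpr ⟨∅, eq_singleton_iff_unique_mem.mpr
    ⟨mem_secFinset.mpr ⟨by simp [InWindow], isValid_empty⟩, fun P hP => ?_⟩⟩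
  exact eq_empty_of_forall_notMem fun p hp => by have := (mem_secFinset.mp hP).1 p hp; omega

theorem closedCount_zero : closedCount s m 0 = 0 :=
  card_eq_zero.mpr (filter_false_of_mem fun P hP h => by
    have := (mem_secFinset.mp hP).1 _ h
    simp at this)

theorem closedCount_of_lt_two (hs : 1 ≤ s) (hn : n < 2) : closedCount s m n = 0 := by
  rw [closedCount_eq_sum hs, Icc_eq_empty (by omega), sum_empty]

theorem closedCount_add_two (hs : 1 ≤ s) (n : ℕ) :
    closedCount s m (n + 2) = closedCount s m n +
      if 2 * s ≤ n + 2 then interiorCount s m (n + 2 - 2 * s) else 0 := by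
  rw [closedCount_eq_sum hs, closedCount_eq_sum hs, sum_Icc_half_add_two _ hs]

open PowerSeries

noncomputable def closedGF (s m : ℕ) : PowerSeries ℚ := mk fun n => (closedCount s m n : ℚ)

noncomputable def interiorGF (s m : ℕ) : PowerSeries ℚ := mk fun n => (interiorCount s m n : ℚ)

theorem Rgf_eq_one_add_X_mul_add_mul_closedGF :
    Rgf s m = 1 + X * Rgf s m + Rgf s m * closedGF s m := by
  ext n
  rw [map_add, map_add, coeff_one, mul_comm, ← pow_one X, coeff_mul_X_pow', coeff_mul,
    Nat.sum_antidiagonal_eq_sum_range_succ_mk]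
  simp only [Rgf, closedGF, coeff_mk]
  rcases n with _ | n
  · simp [secCount_zero, closedCount_zero]
  · rw [secCount_eq_add_sum n.succ_pos]
    push_cast
    simp

theorem Rgf_eq_closedGF_add_interiorGF_add_Tmgf :
    Rgf s m = closedGF s m + interiorGF s m + Tmgf m := by
  ext n
  simp only [map_add, Rgf, closedGF, interiorGF, Tmgf, coeff_mk, map_sum, coeff_X_pow,
    sum_ite_eq, mem_range, secCount_eq_closedCount_add_interiorCount]
  push_cast
  rfl

theorem one_sub_X_sq_mul_closedGF (hs : 1 ≤ s) :
    (1 - X ^ 2) * closedGF s m = X ^ (2 * s) * interiorGF s m := by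
  ext n
  rw [sub_mul, one_mul, mul_comm, mul_comm (X ^ _), map_sub, coeff_mul_X_pow', coeff_mul_X_pow']
  simp only [closedGF, interiorGF, coeff_mk]
  rcases n with _ | _ | n
  · simp [closedCount_of_lt_two hs]
    omega
  · simp [closedCount_of_lt_two hs]
    omega
  · rw [closedCount_add_two hs, if_pos (show 2 ≤ n + 1 + 1 by omega),
      show n + 1 + 1 - 2 = n by omega]
    split_ifs <;> simp

end SecStruct

open SecStruct in
theorem stmt2_general (s m : ℕ) (hs : 1 ≤ s) :
    PowerSeries.X ^ (2 * s) * Rgf s m ^ 2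
      - ((1 - PowerSeries.X) * (1 - PowerSeries.X ^ 2 + PowerSeries.X ^ (2 * s))
          + PowerSeries.X ^ (2 * s) * Tmgf m) * Rgf s m
      + (1 - PowerSeries.X ^ 2 + PowerSeries.X ^ (2 * s)) = 0 := by
  linear_combination
    (-(1 - PowerSeries.X ^ 2 + PowerSeries.X ^ (2 * s))) * Rgf_eq_one_add_X_mul_add_mul_closedGF
    - Rgf s m * one_sub_X_sq_mul_closedGF (m := m) hs
    + (PowerSeries.X ^ (2 * s) * Rgf s m) * Rgf_eq_closedGF_add_interiorGF_add_Tmgf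

theorem stmt2 (s m : ℕ) (hs : 1 ≤ s) (hm : 1 ≤ m) :
    PowerSeries.X ^ (2 * s) * Rgf s m ^ 2
      - ((1 - PowerSeries.X) * (1 - PowerSeries.X ^ 2 + PowerSeries.X ^ (2 * s))
          + PowerSeries.X ^ (2 * s) * Tmgf m) * Rgf s m
      + (1 - PowerSeries.X ^ 2 + PowerSeries.X ^ (2 * s)) = 0 :=
  stmt2_general s m hs
end
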